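/- arXiv:2501.14789 — 2 statements merged into one kernel-verified Lean document; each statement's English description precedes it below -/
import Mathlib

section
/- Let G be a simple graph on a finite vertex set V and let k, u : V → ℕ satisfy k(v) ≤ u(N[v]) for all v ∈ V. Define k' : V → ℕ by k'(v) = u(N[v]) − k(v). Then γ_{k,u}(G) = u(V) − L_{k',u}(G) (note that the function u itself is a (k,u)-dominating function, so γ_{k,u}(G) is well defined). -/
open Classical Finset

/-- The closed neighborhood `N[v]` of `v` in `G`, as a finset. -/
noncomputable def closedNbhd {V : Type*} [Fintype V] (G : SimpleGraph V) (v : V) : Finset V :=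
  Finset.univ.filter (fun w => G.Adj v w ∨ w = v)

lemma mem_closedNbhd_self {V : Type*} [Fintype V] (G : SimpleGraph V) (v : V) :
    v ∈ closedNbhd G v := by simp [closedNbhd]

/-- `f` is a `(k,u)`-dominating function of `G`. -/
def IsDomFn {V : Type*} [Fintype V] (G : SimpleGraph V) (k u f : V → ℕ) : Prop :=
  ∀ v, f v ≤ u v ∧ k v ≤ ∑ w ∈ closedNbhd G v, f w

/-- `f` is a `(k,u)`-packing function of `G`. -/
def IsPackFn {V : Type*} [Fintype V] (G : SimpleGraph V) (k u f : V → ℕ) : Prop :=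
  ∀ v, f v ≤ u v ∧ ∑ w ∈ closedNbhd G v, f w ≤ k v

/-- `γ_{k,u}(G)`: minimum weight of a `(k,u)`-dominating function. -/
noncomputable def gammaKU {V : Type*} [Fintype V] (G : SimpleGraph V) (k u : V → ℕ) : ℕ :=
  sInf {s | ∃ f, IsDomFn G k u f ∧ s = ∑ v, f v}

/-- `L_{k,u}(G)`: maximum weight of a `(k,u)`-packing function. -/
noncomputable def LKU {V : Type*} [Fintype V] (G : SimpleGraph V) (k u : V → ℕ) : ℕ :=
  sSup {s | ∃ f, IsPackFn G k u f ∧ s = ∑ v, f v}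

/-!
Complementation `f ↦ u - f` maps `(k,u)`-dominating functions to `(k',u)`-packing functions
and, since `k ≤ u(N[·])`, back again, sending weight `s` to `u(V) - s`.
-/

section Complement

variable {V : Type*} [Fintype V] {G : SimpleGraph V} {k u f : V → ℕ}

lemma IsDomFn.sum_le (hf : IsDomFn G k u f) : ∑ v, f v ≤ ∑ v, u v :=
  Finset.sum_le_sum fun v _ => (hf v).1

lemma IsPackFn.sum_le (hf : IsPackFn G k u f) : ∑ v, f v ≤ ∑ v, u v :=
  Finset.sum_le_sum fun v _ => (hf v).1

lemma IsDomFn.isPackFn_tsub (hf : IsDomFn G k u f) :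
    IsPackFn G (fun v => (∑ w ∈ closedNbhd G v, u w) - k v) u (u - f) := fun v =>
  ⟨tsub_le_self, by
    rw [Pi.sub_def, Finset.sum_tsub_distrib _ fun w _ => (hf w).1]
    exact tsub_le_tsub_left (hf v).2 _⟩

lemma IsPackFn.isDomFn_tsub (hk : ∀ v, k v ≤ ∑ w ∈ closedNbhd G v, u w)
    (hf : IsPackFn G (fun v => (∑ w ∈ closedNbhd G v, u w) - k v) u f) :
    IsDomFn G k u (u - f) := fun v =>
  ⟨tsub_le_self, by
    rw [Pi.sub_def, Finset.sum_tsub_distrib _ fun w _ => (hf w).1]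
    exact (le_tsub_iff_le_tsub (hk v) ((hf v).2.trans tsub_le_self)).2 (hf v).2⟩

lemma gammaKU_le (hf : IsDomFn G k u f) : gammaKU G k u ≤ ∑ v, f v :=
  Nat.sInf_le ⟨f, hf, rfl⟩

lemma le_LKU (hf : IsPackFn G k u f) : ∑ v, f v ≤ LKU G k u :=
  le_csSup ⟨∑ v, u v, by rintro _ ⟨g, hg, rfl⟩; exact hg.sum_le⟩ ⟨f, hf, rfl⟩

lemma exists_isDomFn_sum_eq_gammaKU (hf : IsDomFn G k u f) :
    ∃ g, IsDomFn G k u g ∧ ∑ v, g v = gammaKU G k u := by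
  obtain ⟨g, hg, hsum⟩ : gammaKU G k u ∈ {s | ∃ g, IsDomFn G k u g ∧ s = ∑ v, g v} :=
    Nat.sInf_mem ⟨_, f, hf, rfl⟩
  exact ⟨g, hg, hsum.symm⟩

lemma exists_isPackFn_sum_eq_LKU : ∃ g, IsPackFn G k u g ∧ ∑ v, g v = LKU G k u := by
  have hzero : IsPackFn G k u 0 := fun v => by simp
  obtain ⟨g, hg, hsum⟩ : LKU G k u ∈ {s | ∃ g, IsPackFn G k u g ∧ s = ∑ v, g v} :=
    Nat.sSup_mem ⟨_, 0, hzero, rfl⟩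
      ⟨∑ v, u v, by rintro _ ⟨g, hg, rfl⟩; exact hg.sum_le⟩
  exact ⟨g, hg, hsum.symm⟩

end Complement

/-- if `k(v) ≤ u(N[v])` for all `v` and `k'(v) = u(N[v]) - k(v)`,
then `γ_{k,u}(G) = u(V) - L_{k',u}(G)`. -/
theorem stmt_1 {V : Type*} [Fintype V] (G : SimpleGraph V) (k u : V → ℕ)
    (hk : ∀ v, k v ≤ ∑ w ∈ closedNbhd G v, u w) :
    gammaKU G k u =
      (∑ v, u v) - LKU G (fun v => (∑ w ∈ closedNbhd G v, u w) - k v) u := by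
  set k' : V → ℕ := fun v => (∑ w ∈ closedNbhd G v, u w) - k v
  obtain ⟨f, hf, hf_sum⟩ := exists_isDomFn_sum_eq_gammaKU (f := u) fun v => ⟨le_rfl, hk v⟩
  obtain ⟨g, hg, hg_sum⟩ := exists_isPackFn_sum_eq_LKU (G := G) (k := k') (u := u)
  have hγ_le : gammaKU G k u ≤ ∑ v, u v - ∑ v, g v := by
    rw [← Finset.sum_tsub_distrib _ fun v _ => (hg v).1]
    exact gammaKU_le (hg.isDomFn_tsub hk)
  have hL_ge : ∑ v, u v - ∑ v, f v ≤ LKU G k' u := by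
    rw [← Finset.sum_tsub_distrib _ fun v _ => (hf v).1]
    exact le_LKU hf.isPackFn_tsub
  have hf_le := hf.sum_le
  have hg_le := hg.sum_le
  omega
end

section
/- Let G be a simple graph on a finite vertex set V with |V| = n ≥ 1 and let k, u : V → ℕ. Let σ : Fin n ≃ V be a strong elimination ordering of G, writing v_i = σ(i): that is, for all indices i ≤ j ≤ l in Fin n, (a) any two vertices of N[v_i] ∩ {v_i, …, v_n} are adjacent or equal (v_i is simplicial in the subgraph induced on {v_i, …, v_n}), and (b) if v_j ∈ N[v_i] and v_l ∈ N[v_i], then N[v_j] ∩ {v_i, …, v_n} ⊆ N[v_l] ∩ {v_i, …, v_n}. Suppose f : Fin n → ℕ satisfies, for every i, the greedy recursion f(i) = min( u(v_i), min_{w ∈ N[v_i]} ( k(w) ∸ ∑_{j < i, v_j ∈ N[w]} f(j) ) ), where ∸ is truncated subtraction in ℕ. Then ∑_{i} f(i) = L_{k,u}(G), i.e., the greedy function attains the maximum weight among all (k,u)-packing functions of G. -/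
open Classical Finset

/-!
The greedy function is a packing function, since each value is capped by the residual capacity
of every neighbourhood containing its vertex. For optimality, take any packing function `g` that
agrees with the greedy `f` before `v`; then `g v ≤ f v`. While `g v < f v`, either no
neighbourhood through `v` is saturated and `g v` can be raised, or the earliest saturated one,
`N[m₀]`, carries weight on some `l > v`. The nesting condition (b) puts `l` in every saturated
neighbourhood through `v`, so a unit can be moved from `l` to `v` without losing weight. Repeating
this along the order turns `g` into `f` without decreasing the total weight.
-/

lemma mem_closedNbhd_comm {V : Type*} [Fintype V] (G : SimpleGraph V) {v w : V} :
    w ∈ closedNbhd G v ↔ v ∈ closedNbhd G w := by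
  simp [closedNbhd, G.adj_comm, eq_comm]

theorem Set.induction_Iio_Iic {V : Type*} [Fintype V] [LinearOrder V]
    {p : Set V → Prop} (empty : p ∅) (step : ∀ a, p (Set.Iio a) → p (Set.Iic a)) :
    p Set.univ := by
  suffices h : ∀ s : Finset V, IsLowerSet (s : Set V) → p s by
    simpa using h Finset.univ (by simpa using isLowerSet_univ)
  intro s
  induction s using Finset.induction_on_max with
  | empty => exact fun _ => by simpa using empty
  | insert a s hlt ih =>
    intro hlower
    have hs : (s : Set V) = Set.Iio a := by
      ext x
      refine ⟨fun hx => hlt x hx, fun hx => ?_⟩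
      have := hlower (le_of_lt hx) (by simp : a ∈ (insert a s : Finset V))
      simpa [hx.ne] using this
    have hs' : ((insert a s : Finset V) : Set V) = Set.Iic a := by
      rw [Finset.coe_insert, hs, Set.Iio_insert]
    rw [hs']
    exact step a (hs ▸ ih (hs ▸ isLowerSet_Iio a))

section LinearOrder

variable {V M : Type*} [LinearOrder V] [AddCommMonoid M]

lemma Finset.sum_filter_le_eq (s : Finset V) (g : V → M) (a : V) :
    ∑ x ∈ s with x ≤ a, g x = ∑ x ∈ s with x < a, g x + if a ∈ s then g a else 0 := by
  rw [← Finset.sum_ite_eq s a g, Finset.sum_filter, Finset.sum_filter, ← Finset.sum_add_distrib]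
  refine Finset.sum_congr rfl fun x _ => ?_
  rcases lt_trichotomy x a with h | rfl | h
  · simp [h.le, h, h.ne']
  · simp
  · simp [h.not_ge, h.not_gt, h.ne]

lemma Finset.sum_eq_sum_filter_lt_add_add (s : Finset V) (g : V → M) {a : V} (ha : a ∈ s) :
    ∑ x ∈ s, g x = ∑ x ∈ s with x < a, g x + g a + ∑ x ∈ s with a < x, g x := by
  rw [← Finset.sum_filter_add_sum_filter_not s (· ≤ a), Finset.sum_filter_le_eq, if_pos ha]
  simp only [not_le]

lemma Finset.sum_filter_lt_congr {s : Finset V} {g f : V → M} {a : V}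
    (h : Set.EqOn g f (Set.Iio a)) : ∑ x ∈ s with x < a, g x = ∑ x ∈ s with x < a, f x :=
  Finset.sum_congr rfl fun _ hx => h (Finset.mem_filter.1 hx).2

end LinearOrder

section Packing

variable {V : Type*} [DecidableEq V] {u g : V → ℕ}

lemma sum_add_single (g : V → ℕ) (v : V) (s : Finset V) :
    ∑ x ∈ s, (g + Pi.single v 1 : V → ℕ) x = ∑ x ∈ s, g x + if v ∈ s then 1 else 0 := by
  simp [Finset.sum_add_distrib, Finset.sum_pi_single']

lemma sum_add_single_sub_single {l : V} (hl : 0 < g l) (v : V) (s : Finset V) :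
    ∑ x ∈ s, (g + Pi.single v 1 - Pi.single l 1 : V → ℕ) x + (if l ∈ s then 1 else 0) =
      ∑ x ∈ s, g x + if v ∈ s then 1 else 0 := by
  have hle : Pi.single l 1 ≤ g + Pi.single v 1 := by
    intro x
    rcases eq_or_ne x l with rfl | hx
    · simp only [Pi.single_eq_same, Pi.add_apply]; omega
    · simp [hx]
  rw [← sum_add_single, ← sum_add_single, tsub_add_cancel_of_le hle]

lemma add_single_le_of_lt {v : V} (hgu : ∀ x, g x ≤ u x) (hv : g v < u v) (x : V) :
    (g + Pi.single v 1 : V → ℕ) x ≤ u x := by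
  rcases eq_or_ne x v with rfl | hx
  · simpa using hv
  · simpa [hx] using hgu x

variable [Fintype V] {G : SimpleGraph V} {k : V → ℕ}

lemma IsPackFn.add_single {v : V} (hg : IsPackFn G k u g) (hv : g v < u v)
    (hslack : ∀ m, v ∈ closedNbhd G m → ∑ x ∈ closedNbhd G m, g x < k m) :
    IsPackFn G k u (g + Pi.single v 1) := by
  intro m
  refine ⟨add_single_le_of_lt (fun x => (hg x).1) hv m, ?_⟩
  rw [sum_add_single]
  by_cases hm : v ∈ closedNbhd G m
  · simpa [hm] using hslack m hm
  · simpa [hm] using (hg m).2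

lemma IsPackFn.add_single_sub_single {v l : V} (hg : IsPackFn G k u g) (hv : g v < u v)
    (hl : 0 < g l)
    (htight : ∀ m, v ∈ closedNbhd G m → ∑ x ∈ closedNbhd G m, g x = k m → l ∈ closedNbhd G m) :
    IsPackFn G k u (g + Pi.single v 1 - Pi.single l 1) := by
  intro m
  refine ⟨(tsub_le_self (a := (g + Pi.single v 1 : V → ℕ) m)).trans
    (add_single_le_of_lt (fun x => (hg x).1) hv m), ?_⟩
  have hsum := sum_add_single_sub_single hl v (closedNbhd G m)
  have hk := (hg m).2
  by_cases hm : v ∈ closedNbhd G m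
  · rcases hk.lt_or_eq with hlt | heq
    · split_ifs at hsum <;> omega
    · simp only [htight m hm heq, hm, if_true] at hsum; omega
  · split_ifs at hsum <;> omega

end Packing

section Greedy

variable {V : Type*} [Fintype V] [LinearOrder V] {G : SimpleGraph V} {k u f g : V → ℕ}

/-- Condition (b) of a strong elimination ordering, for the order of `V`. -/
def IsNbhdNestedOrder (G : SimpleGraph V) : Prop :=
  ∀ i j l : V, i ≤ j → j ≤ l → j ∈ closedNbhd G i → l ∈ closedNbhd G i →
    ∀ m, i ≤ m → m ∈ closedNbhd G j → m ∈ closedNbhd G l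

lemma IsNbhdNestedOrder.mem_closedNbhd (hG : IsNbhdNestedOrder G) {v l m₀ m : V}
    (hm : m₀ ≤ m) (hvl : v ≤ l) (hv₀ : v ∈ closedNbhd G m₀) (hv : v ∈ closedNbhd G m)
    (hl : l ∈ closedNbhd G m₀) : l ∈ closedNbhd G m := by
  rw [mem_closedNbhd_comm] at hv₀ hv
  rcases le_total v m₀ with h | h
  · exact hG v m₀ m h hm hv₀ hv l hvl hl
  · rw [mem_closedNbhd_comm] at hv₀
    exact (mem_closedNbhd_comm G).1 (hG m₀ v l h hvl hv₀ hl m hm hv)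

def IsGreedyPacking (G : SimpleGraph V) (k u f : V → ℕ) : Prop :=
  ∀ v, f v = min (u v) ((closedNbhd G v).inf' ⟨v, mem_closedNbhd_self G v⟩
    fun w => k w - ∑ x ∈ closedNbhd G w with x < v, f x)

namespace IsGreedyPacking

lemma apply_le_u (hf : IsGreedyPacking G k u f) (v : V) : f v ≤ u v :=
  (hf v).trans_le (min_le_left _ _)

lemma apply_le_sub (hf : IsGreedyPacking G k u f) {v w : V} (hw : w ∈ closedNbhd G v) :
    f v ≤ k w - ∑ x ∈ closedNbhd G w with x < v, f x :=
  (hf v).trans_le ((min_le_right _ _).trans (Finset.inf'_le _ hw))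

theorem isPackFn (hf : IsGreedyPacking G k u f) : IsPackFn G k u f := by
  refine fun w => ⟨hf.apply_le_u w, ?_⟩
  have key := Set.induction_Iio_Iic
    (p := fun S => ∑ x ∈ closedNbhd G w with x ∈ S, f x ≤ k w) (by simp) fun a ih => by
      simp only [Set.mem_Iio, Set.mem_Iic] at ih ⊢
      rw [Finset.sum_filter_le_eq]
      split_ifs with ha
      · have := hf.apply_le_sub ((mem_closedNbhd_comm G).1 ha)
        omega
      · simpa using ih
  simpa using key

lemma le_of_eqOn (hf : IsGreedyPacking G k u f) (hg : IsPackFn G k u g) {v : V}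
    (hgf : Set.EqOn g f (Set.Iio v)) : g v ≤ f v := by
  rw [hf v]
  refine le_min (hg v).1 (Finset.le_inf' _ _ fun w hw => ?_)
  have hsplit := Finset.sum_eq_sum_filter_lt_add_add (closedNbhd G w) g
    ((mem_closedNbhd_comm G).1 hw)
  rw [Finset.sum_filter_lt_congr hgf] at hsplit
  have := (hg w).2
  omega

lemma exists_lt_pos_of_tight (hf : IsGreedyPacking G k u f) {v m : V}
    (hgf : Set.EqOn g f (Set.Iio v)) (hlt : g v < f v) (hv : v ∈ closedNbhd G m)
    (htight : ∑ x ∈ closedNbhd G m, g x = k m) :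
    ∃ l ∈ closedNbhd G m, v < l ∧ 0 < g l := by
  have hsplit := Finset.sum_eq_sum_filter_lt_add_add (closedNbhd G m) g hv
  rw [Finset.sum_filter_lt_congr hgf] at hsplit
  have := hf.apply_le_sub ((mem_closedNbhd_comm G).1 hv)
  obtain ⟨l, hl, hgl⟩ := Finset.sum_pos_iff.1
    (show 0 < ∑ x ∈ closedNbhd G m with v < x, g x by omega)
  exact ⟨l, (Finset.mem_filter.1 hl).1, (Finset.mem_filter.1 hl).2, hgl⟩

theorem exists_isPackFn_add_one (hG : IsNbhdNestedOrder G) (hf : IsGreedyPacking G k u f)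
    (hg : IsPackFn G k u g) {v : V} (hgf : Set.EqOn g f (Set.Iio v)) (hlt : g v < f v) :
    ∃ g', IsPackFn G k u g' ∧ Set.EqOn g' f (Set.Iio v) ∧ g' v = g v + 1 ∧
      ∑ x, g x ≤ ∑ x, g' x := by
  have hu : g v < u v := hlt.trans_le (hf.apply_le_u v)
  set T := univ.filter fun m => v ∈ closedNbhd G m ∧ ∑ x ∈ closedNbhd G m, g x = k m
  by_cases hT : T.Nonempty
  · -- The earliest saturated neighbourhood through `v` is taken so that the nesting condition
    -- puts `l` in every other one.
    obtain ⟨hv₀, htight₀⟩ := (Finset.mem_filter.1 (T.min'_mem hT)).2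
    obtain ⟨l, hl, hvl, hgl⟩ := hf.exists_lt_pos_of_tight hgf hlt hv₀ htight₀
    have hcover : ∀ m, v ∈ closedNbhd G m → ∑ x ∈ closedNbhd G m, g x = k m →
        l ∈ closedNbhd G m := fun m hv htight =>
      hG.mem_closedNbhd (T.min'_le m (by simp [T, hv, htight])) hvl.le hv₀ hv hl
    refine ⟨g + Pi.single v 1 - Pi.single l 1, hg.add_single_sub_single hu hgl hcover,
      fun x hx => ?_, by simp [hvl.ne], ?_⟩
    · have hxv : x < v := hx
      simpa [hxv.ne, (hxv.trans hvl).ne] using hgf hx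
    · have := sum_add_single_sub_single hgl v univ
      simp only [Finset.mem_univ, if_true] at this
      omega
  · have hslack : ∀ m, v ∈ closedNbhd G m → ∑ x ∈ closedNbhd G m, g x < k m :=
      fun m hv => (hg m).2.lt_of_ne fun h => hT ⟨m, by simp [T, hv, h]⟩
    refine ⟨g + Pi.single v 1, hg.add_single hu hslack, fun x hx => ?_, by simp, ?_⟩
    · have hxv : x < v := hx
      simpa [hxv.ne] using hgf hx
    · rw [sum_add_single]
      exact Nat.le_add_right _ _

theorem exists_isPackFn_eqOn_Iic (hG : IsNbhdNestedOrder G) (hf : IsGreedyPacking G k u f)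
    (hg : IsPackFn G k u g) {v : V} (hgf : Set.EqOn g f (Set.Iio v)) :
    ∃ g', IsPackFn G k u g' ∧ Set.EqOn g' f (Set.Iic v) ∧ ∑ x, g x ≤ ∑ x, g' x := by
  obtain ⟨c, hc⟩ := Nat.exists_eq_add_of_le (hf.le_of_eqOn hg hgf)
  induction c generalizing g with
  | zero =>
    refine ⟨g, hg, fun x hx => ?_, le_rfl⟩
    rcases (Set.mem_Iic.1 hx).lt_or_eq with hxv | rfl
    · exact hgf hxv
    · exact hc.symm
  | succ c ih =>
    obtain ⟨g₁, hg₁, hg₁f, hg₁v, hsum₁⟩ := hf.exists_isPackFn_add_one hG hg hgf (by omega)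
    obtain ⟨g', hg', hg'f, hsum'⟩ := ih hg₁ hg₁f (by omega)
    exact ⟨g', hg', hg'f, hsum₁.trans hsum'⟩

theorem sum_le (hG : IsNbhdNestedOrder G) (hf : IsGreedyPacking G k u f)
    (hg : IsPackFn G k u g) : ∑ x, g x ≤ ∑ x, f x := by
  obtain ⟨g', hg', hg'f, hsum⟩ := Set.induction_Iio_Iic
    (p := fun S => ∃ g', IsPackFn G k u g' ∧ Set.EqOn g' f S ∧ ∑ x, g x ≤ ∑ x, g' x)
    ⟨g, hg, Set.eqOn_empty _ _, le_rfl⟩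
    fun _ ⟨_, hg₁, hg₁f, hsum₁⟩ => by
      obtain ⟨g', hg', hg'f, hsum'⟩ := hf.exists_isPackFn_eqOn_Iic hG hg₁ hg₁f
      exact ⟨g', hg', hg'f, hsum₁.trans hsum'⟩
  rwa [(Set.eqOn_univ g' f).1 hg'f] at hsum

theorem sum_eq_LKU (hG : IsNbhdNestedOrder G) (hf : IsGreedyPacking G k u f) :
    ∑ x, f x = LKU G k u := by
  refine (IsGreatest.csSup_eq (s := {s | ∃ g, IsPackFn G k u g ∧ s = ∑ v, g v})
    ⟨⟨f, hf.isPackFn, rfl⟩, ?_⟩).symm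
  rintro _ ⟨g, hg, rfl⟩
  exact hf.sum_le hG hg

end IsGreedyPacking

end Greedy

section Comap

variable {V W : Type*} [Fintype V] [Fintype W] (G : SimpleGraph V) (σ : W ≃ V)

lemma mem_closedNbhd_comap {i j : W} :
    j ∈ closedNbhd (G.comap σ) i ↔ σ j ∈ closedNbhd G (σ i) := by
  simp [closedNbhd]

lemma closedNbhd_comap (i : W) :
    closedNbhd G (σ i) = (closedNbhd (G.comap σ) i).map σ.toEmbedding := by
  ext v
  obtain ⟨j, rfl⟩ := σ.surjective v
  simp [mem_closedNbhd_comap]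

lemma sum_closedNbhd_comap (g : V → ℕ) (i : W) :
    ∑ j ∈ closedNbhd (G.comap σ) i, g (σ j) = ∑ v ∈ closedNbhd G (σ i), g v := by
  simp [closedNbhd_comap]

lemma isPackFn_comap_iff {k u g : V → ℕ} :
    IsPackFn (G.comap σ) (k ∘ σ) (u ∘ σ) (g ∘ σ) ↔ IsPackFn G k u g := by
  simp only [IsPackFn, Function.comp_apply, sum_closedNbhd_comap]
  exact σ.forall_congr_right (q := fun v => g v ≤ u v ∧ ∑ w ∈ closedNbhd G v, g w ≤ k v)

lemma LKU_comap (k u : V → ℕ) : LKU (G.comap σ) (k ∘ σ) (u ∘ σ) = LKU G k u := by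
  unfold LKU
  congr 1
  ext s
  constructor
  · rintro ⟨g, hg, rfl⟩
    refine ⟨g ∘ σ.symm, (isPackFn_comap_iff G σ).1 (by simpa [Function.comp_def] using hg), ?_⟩
    exact (σ.symm.sum_comp g).symm
  · rintro ⟨g, hg, rfl⟩
    exact ⟨g ∘ σ, (isPackFn_comap_iff G σ).2 hg, (σ.sum_comp g).symm⟩

end Comap

theorem stmt_14_general {V : Type*} [Fintype V] (G : SimpleGraph V) (k u : V → ℕ)
    (n : ℕ) (σ : Fin n ≃ V)
    -- (b) for `i ≤ j ≤ l` with `σ j, σ l ∈ N[σ i]`: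
    --     `N[σ j] ∩ {σ i, …} ⊆ N[σ l] ∩ {σ i, …}`
    (hb : ∀ i j l : Fin n, i ≤ j → j ≤ l →
      σ j ∈ closedNbhd G (σ i) → σ l ∈ closedNbhd G (σ i) →
      ∀ m : Fin n, i ≤ m → σ m ∈ closedNbhd G (σ j) → σ m ∈ closedNbhd G (σ l))
    (f : Fin n → ℕ)
    (hf : ∀ i : Fin n,
      f i = min (u (σ i))
        ((closedNbhd G (σ i)).inf' ⟨σ i, mem_closedNbhd_self G (σ i)⟩
          (fun w => k w -
            ∑ j ∈ Finset.univ.filter (fun j : Fin n => j < i ∧ σ j ∈ closedNbhd G w), f j))) :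
    (∑ i, f i) = LKU G k u := by
  have hG : IsNbhdNestedOrder (G.comap σ) := by
    intro i j l hij hjl hj hl m him hm
    simp only [mem_closedNbhd_comap] at *
    exact hb i j l hij hjl hj hl m him hm
  have hgreedy : IsGreedyPacking (G.comap σ) (k ∘ σ) (u ∘ σ) f := by
    intro i
    rw [hf i]
    congr 1
    refine (Finset.inf'_congr _ (closedNbhd_comap G σ i) fun _ _ => rfl).trans <|
      (Finset.inf'_map _ _).trans <| Finset.inf'_congr _ rfl fun j _ => ?_
    simp only [Function.comp_apply]
    congr 2
    ext x
    simp [mem_closedNbhd_comap, and_comm]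
  rw [← LKU_comap G σ]
  exact hgreedy.sum_eq_LKU hG

/-- if `σ` is a strong elimination ordering of `G`, then the greedy
function attains the maximum weight `L_{k,u}(G)` among all `(k,u)`-packing functions. -/
theorem stmt_14 {V : Type*} [Fintype V] (G : SimpleGraph V) (k u : V → ℕ)
    (n : ℕ) (hn : 1 ≤ n) (σ : Fin n ≃ V)
    -- (a) each `σ i` is simplicial in the subgraph induced on `{σ i, …, σ (n-1)}`
    (ha : ∀ i j l : Fin n, i ≤ j → j ≤ l →
      σ j ∈ closedNbhd G (σ i) → σ l ∈ closedNbhd G (σ i) →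
      σ j = σ l ∨ G.Adj (σ j) (σ l))
    -- (b) for `i ≤ j ≤ l` with `σ j, σ l ∈ N[σ i]`:
    --     `N[σ j] ∩ {σ i, …} ⊆ N[σ l] ∩ {σ i, …}`
    (hb : ∀ i j l : Fin n, i ≤ j → j ≤ l →
      σ j ∈ closedNbhd G (σ i) → σ l ∈ closedNbhd G (σ i) →
      ∀ m : Fin n, i ≤ m → σ m ∈ closedNbhd G (σ j) → σ m ∈ closedNbhd G (σ l))
    (f : Fin n → ℕ)
    (hf : ∀ i : Fin n,
      f i = min (u (σ i))
        ((closedNbhd G (σ i)).inf' ⟨σ i, mem_closedNbhd_self G (σ i)⟩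
          (fun w => k w -
            ∑ j ∈ Finset.univ.filter (fun j : Fin n => j < i ∧ σ j ∈ closedNbhd G w), f j))) :
    (∑ i, f i) = LKU G k u :=
  stmt_14_general G k u n σ hb f hf
end
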